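/- Finite Dougall identity: let j be a nonnegative integer, s > 0 a real number, and x, y real with x, y, x - y - j > 0. Define E1(q) := (1/s!) C(j,q) (y+2q+s) (q+s-1)! * (y+j)^{\underline{j-q}} / (y+q+s+j)^{\underline{j+1}} * (x-y)^{\underline{q}} * (x+j+s)^{\underline{s}} / (x+q+s)^{\underline{q+s}} (interpreted via Gamma functions when s is not an integer). Then Σ_{q=0}^{j} E1(q) = E1(0) * ((x+j)^{\underline{j}} (y+s+j)^{\underline{j}}) / ((y+j)^{\underline{j}} (x+s+j)^{\underline{j}}). -/

import Mathlib

/-- Falling factorial `x(x-1)⋯(x-n+1)`. -/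
noncomputable def ff (x : ℝ) (n : ℕ) : ℝ := ∏ i ∈ Finset.range n, (x - i)

/-- The summand `E1(q)` of the finite Dougall identity, with real parameter `s`;
fractional falling factorials and factorials are interpreted via the Gamma function:
`s! = Γ(s+1)`, `(q+s-1)! = Γ(q+s)`,
`(x+j+s)^{underline s} = Γ(x+j+s+1)/Γ(x+j+1)`,
`(x+q+s)^{underline (q+s)} = Γ(x+q+s+1)/Γ(x+1)`. -/
noncomputable def E1 (j : ℕ) (x y s : ℝ) (q : ℕ) : ℝ :=
  (1 / Real.Gamma (s + 1)) * (j.choose q : ℝ) * (y + 2 * q + s) * Real.Gamma (q + s) *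
    (ff (y + j) (j - q) / ff (y + q + s + j) (j + 1)) * ff (x - y) q *
    ((Real.Gamma (x + j + s + 1) / Real.Gamma (x + j + 1)) *
      (Real.Gamma (x + 1) / Real.Gamma (x + q + s + 1)))

/-!
Dividing by `s` removes every Gamma function: `E1 j x y s q = F j q / s` for the hypergeometric
term `F = dougallF`, and `F j 0` is the reciprocal of the quotient of falling factorials on the
right, so the identity says `∑ q ≤ j, F j q = 1`. This follows by induction on `j` from the
Wilf–Zeilberger pair `(F, G = dougallG)`: `F (j+1) q - F j q = G j (q+1) - G j q` for `q ≤ j`,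
so the sum over `q` telescopes, and the new boundary term `F (j+1) (j+1)` cancels `G j (j+1)`.
Each of `F (j+1) q`, `G j q`, `G j (q+1)` is `F j q` times a rational function of
`j, q, x, y, s`, which reduces the WZ equation to a rational identity.
-/

lemma ff_zero (x : ℝ) : ff x 0 = 1 := Finset.prod_range_zero _

lemma ff_succ (x : ℝ) (n : ℕ) : ff x (n + 1) = ff x n * (x - n) :=
  Finset.prod_range_succ _ _

lemma ff_add_one_succ (x : ℝ) (n : ℕ) : ff (x + 1) (n + 1) = (x + 1) * ff x n := by
  rw [ff, Finset.prod_range_succ', ff, mul_comm]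
  push_cast
  simp only [sub_zero, add_sub_add_right_eq_sub]

lemma ff_pos {x : ℝ} {n : ℕ} (h : (n : ℝ) < x + 1) : 0 < ff x n :=
  Finset.prod_pos fun i hi => by
    have : (i : ℝ) + 1 ≤ n := by exact_mod_cast Finset.mem_range.mp hi
    linarith

lemma Gamma_add_nat_eq_ff_mul {t : ℝ} (ht : 0 < t) (k : ℕ) :
    Real.Gamma (t + k) = ff (t + k - 1) k * Real.Gamma t := by
  induction k with
  | zero => simp [ff_zero]
  | succ k ih =>
    have hpos : t + k ≠ 0 := by positivity
    rw [Nat.cast_succ, ← add_assoc, Real.Gamma_add_one hpos, ih,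
      show t + k + 1 - 1 = t + k - 1 + 1 by ring, ff_add_one_succ]
    ring

lemma cast_choose_succ_left {j q : ℕ} (hq : q ≤ j) :
    ((j + 1).choose q : ℝ) = j.choose q * (j + 1) / (j + 1 - q) := by
  have hpos : (0 : ℝ) < j + 1 - q := by
    have : (q : ℝ) ≤ j := by exact_mod_cast hq
    linarith
  rw [eq_div_iff hpos.ne']
  have h := Nat.choose_mul_succ_eq j q
  rw [Nat.succ_sub hq] at h
  have h' : ((j.choose q * (j + 1) : ℕ) : ℝ) = ((j + 1).choose q * (j - q + 1) : ℕ) := by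
    rw [h]
  push_cast [Nat.cast_sub hq] at h'
  linarith

lemma cast_choose_succ_succ (j q : ℕ) :
    ((j + 1).choose (q + 1) : ℝ) = j.choose q * (j + 1) / (q + 1) := by
  rw [eq_div_iff (by positivity)]
  have h : (((j + 1).choose (q + 1) * (q + 1) : ℕ) : ℝ) = ((j + 1) * j.choose q : ℕ) := by
    rw [Nat.add_one_mul_choose_eq]
  push_cast at h
  linarith

noncomputable def dougallF (j : ℕ) (x y s : ℝ) (q : ℕ) : ℝ :=
  (j.choose q : ℝ) * (y + 2 * q + s) * ff (s + q - 1) q * ff (y + j) (j - q) *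
    ff (x + s + j) (j - q) * ff (x - y) q / (ff (y + q + s + j) (j + 1) * ff (x + j) j)

/-- The WZ certificate `G j q = R j q * F j q` with
`R j q = -q (y+q) (x+s+q) / ((j+1-q) (x+j+1) (y+2q+s))`, cleared of the factor `j+1-q` so that
it keeps its true value at `q = j+1`. -/
noncomputable def dougallG (j : ℕ) (x y s : ℝ) (q : ℕ) : ℝ :=
  -((q : ℝ) * ((j + 1).choose q : ℝ) * ff (s + q - 1) q * ff (y + j) (j + 1 - q) *
      ff (x + s + j) (j + 1 - q) * ff (x - y) q) /
    ((j + 1) * (x + j + 1) * ff (y + q + s + j) (j + 1) * ff (x + j) j)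

section

variable {x y s : ℝ} {j q : ℕ}

lemma dougallF_succ_left (hs : 0 < s) (hx : 0 < x) (hy : 0 < y) (hq : q ≤ j) :
    dougallF (j + 1) x y s q = dougallF j x y s q *
      ((j + 1) * (y + j + 1) * (x + s + j + 1) /
        ((j + 1 - q) * (y + q + s + j + 1) * (x + j + 1))) := by
  have hjq : (q : ℝ) ≤ j := by exact_mod_cast hq
  have hW : 0 < ff (y + q + s + j) (j + 1) := ff_pos (by push_cast; linarith)
  have hQ : 0 < ff (x + j) j := ff_pos (by linarith)
  have h1 : (0 : ℝ) < j + 1 - q := by linarith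
  have h2 : (0 : ℝ) < y + q + s + j + 1 := by linarith
  have h3 : (0 : ℝ) < x + j + 1 := by linarith
  unfold dougallF
  rw [show j + 1 - q = j - q + 1 by omega, cast_choose_succ_left hq]
  simp only [Nat.cast_add, Nat.cast_one, ← add_assoc, ff_add_one_succ]
  field_simp

lemma dougallG_eq_mul (hs : 0 < s) (hx : 0 < x) (hy : 0 < y) (hq : q ≤ j) :
    dougallG j x y s q = dougallF j x y s q *
      (-(q * (y + q) * (x + s + q)) / ((j + 1 - q) * (x + j + 1) * (y + 2 * q + s))) := by
  have hjq : (q : ℝ) ≤ j := by exact_mod_cast hq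
  have hW : 0 < ff (y + q + s + j) (j + 1) := ff_pos (by push_cast; linarith)
  have hQ : 0 < ff (x + j) j := ff_pos (by linarith)
  have h1 : (0 : ℝ) < j + 1 - q := by linarith
  have h2 : (0 : ℝ) < y + 2 * q + s := by linarith
  have h3 : (0 : ℝ) < x + j + 1 := by linarith
  unfold dougallF dougallG
  rw [show j + 1 - q = j - q + 1 by omega, cast_choose_succ_left hq, ff_succ, ff_succ,
    Nat.cast_sub hq]
  field_simp
  ring

lemma dougallG_succ_right_eq_mul (hs : 0 < s) (hx : 0 < x) (hy : 0 < y) (hq : q ≤ j) :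
    dougallG j x y s (q + 1) = dougallF j x y s q *
      (-((s + q) * (x - y - q) * (y + q + s)) /
        ((x + j + 1) * (y + q + s + j + 1) * (y + 2 * q + s))) := by
  have hjq : (q : ℝ) ≤ j := by exact_mod_cast hq
  have hW : 0 < ff (y + q + s + j) j := ff_pos (by linarith)
  have hQ : 0 < ff (x + j) j := ff_pos (by linarith)
  have h1 : (0 : ℝ) < y + q + s := by linarith
  have h2 : (0 : ℝ) < y + 2 * q + s := by linarith
  have h3 : (0 : ℝ) < x + j + 1 := by linarith
  have h4 : (0 : ℝ) < y + q + s + j + 1 := by linarith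
  have hshift :
      ff (y + (q + 1 : ℕ) + s + j) (j + 1) = (y + q + s + j + 1) * ff (y + q + s + j) j := by
    rw [← ff_add_one_succ]
    push_cast
    ring_nf
  unfold dougallF dougallG
  rw [show j + 1 - (q + 1) = j - q by omega, cast_choose_succ_succ, hshift,
    ff_succ (y + q + s + j), ff_succ (x - y), add_sub_cancel_right,
    show s + ((q + 1 : ℕ) : ℝ) - 1 = s + q - 1 + 1 by push_cast; ring, ff_add_one_succ]
  push_cast
  field_simp
  ring

lemma dougallF_succ_left_sub_dougallF (hs : 0 < s) (hx : 0 < x) (hy : 0 < y) (hq : q ≤ j) :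
    dougallF (j + 1) x y s q - dougallF j x y s q =
      dougallG j x y s (q + 1) - dougallG j x y s q := by
  have hjq : (q : ℝ) ≤ j := by exact_mod_cast hq
  have h1 : (0 : ℝ) < j + 1 - q := by linarith
  have h2 : (0 : ℝ) < y + 2 * q + s := by linarith
  have h3 : (0 : ℝ) < x + j + 1 := by linarith
  have h4 : (0 : ℝ) < y + q + s + j + 1 := by linarith
  rw [dougallF_succ_left hs hx hy hq, dougallG_succ_right_eq_mul hs hx hy hq,
    dougallG_eq_mul hs hx hy hq]
  field_simp
  ring

lemma dougallF_succ_self_add_dougallG (hs : 0 < s) (hx : 0 < x) (hy : 0 < y) (j : ℕ) :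
    dougallF (j + 1) x y s (j + 1) + dougallG j x y s (j + 1) = 0 := by
  have hW : 0 < ff (y + (j + 1 : ℕ) + s + j) (j + 1) := ff_pos (by push_cast; linarith)
  have hQ : 0 < ff (x + j) j := ff_pos (by linarith)
  have h1 : (0 : ℝ) < x + j + 1 := by linarith
  have h2 : (0 : ℝ) < y + (j + 1 : ℕ) + s + j + 1 := by positivity
  unfold dougallF dougallG
  simp only [Nat.choose_self, Nat.sub_self, ff_zero, Nat.cast_one]
  have hW' : ff (y + (j + 1 : ℕ) + s + (j + 1 : ℕ)) (j + 1 + 1) =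
      (y + (j + 1 : ℕ) + s + j + 1) * ff (y + (j + 1 : ℕ) + s + j) (j + 1) := by
    rw [← ff_add_one_succ]
    push_cast
    ring_nf
  have hQ' : ff (x + (j + 1 : ℕ)) (j + 1) = (x + j + 1) * ff (x + j) j := by
    rw [← ff_add_one_succ]
    push_cast
    ring_nf
  rw [hW', hQ']
  field_simp
  push_cast
  ring

lemma sum_dougallF (hs : 0 < s) (hx : 0 < x) (hy : 0 < y) (j : ℕ) :
    ∑ q ∈ Finset.range (j + 1), dougallF j x y s q = 1 := by
  induction j with
  | zero =>
    have h : y + s ≠ 0 := by linarith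
    simp [dougallF, ff, h]
  | succ j ih =>
    have hG0 : dougallG j x y s 0 = 0 := by simp [dougallG]
    have hstep : ∀ q ∈ Finset.range (j + 1), dougallF (j + 1) x y s q =
        dougallF j x y s q + (dougallG j x y s (q + 1) - dougallG j x y s q) := fun q hq =>
      eq_add_of_sub_eq' <|
        dougallF_succ_left_sub_dougallF hs hx hy (Finset.mem_range_succ_iff.mp hq)
    rw [Finset.sum_range_succ, Finset.sum_congr rfl hstep, Finset.sum_add_distrib, ih,
      Finset.sum_range_sub, hG0, ← dougallF_succ_self_add_dougallG hs hx hy j]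
    ring

lemma E1_eq_dougallF_div (hs : 0 < s) (hx : 0 < x) (hy : 0 < y) (hq : q ≤ j) :
    E1 j x y s q = dougallF j x y s q / s := by
  have hΓs : Real.Gamma (q + s) = ff (s + q - 1) q * Real.Gamma (s + 1) / s := by
    rw [Real.Gamma_add_one hs.ne', add_comm (q : ℝ), Gamma_add_nat_eq_ff_mul hs]
    field_simp
  have hΓx : Real.Gamma (x + j + 1) = ff (x + j) j * Real.Gamma (x + 1) := by
    rw [add_right_comm, Gamma_add_nat_eq_ff_mul (by linarith)]
    congr 2
    ring
  have hΓxs :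
      Real.Gamma (x + j + s + 1) = ff (x + s + j) (j - q) * Real.Gamma (x + q + s + 1) := by
    have h := Gamma_add_nat_eq_ff_mul (t := x + q + s + 1) (by positivity) (j - q)
    rw [Nat.cast_sub hq] at h
    convert h using 2 <;> ring_nf
  have hW : 0 < ff (y + q + s + j) (j + 1) := ff_pos (by push_cast; linarith)
  have hQ : 0 < ff (x + j) j := ff_pos (by linarith)
  have hΓs1 := Real.Gamma_pos_of_pos (show 0 < s + 1 by linarith)
  have hΓx1 := Real.Gamma_pos_of_pos (show 0 < x + 1 by linarith)
  have hΓxqs := Real.Gamma_pos_of_pos (show 0 < x + q + s + 1 by positivity)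
  rw [E1, dougallF, hΓs, hΓx, hΓxs]
  field_simp

lemma dougallF_zero_right (hs : 0 < s) (hy : 0 < y) (j : ℕ) :
    dougallF j x y s 0 = ff (y + j) j * ff (x + s + j) j / (ff (y + s + j) j * ff (x + j) j) := by
  have hys : y + s ≠ 0 := by linarith
  simp only [dougallF, Nat.choose_zero_right, Nat.cast_zero, Nat.sub_zero, ff_zero, ff_succ,
    mul_zero, add_zero, mul_one, Nat.cast_one, add_sub_cancel_right]
  rw [← mul_div_mul_right (ff (y + j) j * ff (x + s + j) j) _ hys]
  congr 1 <;> ring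

end

theorem stmt9_general (j : ℕ) (s x y : ℝ) (hs : 0 < s) (hx : 0 < x) (hy : 0 < y) :
    ∑ q ∈ Finset.range (j + 1), E1 j x y s q =
      E1 j x y s 0 * (ff (x + j) j * ff (y + s + j) j) /
        (ff (y + j) j * ff (x + s + j) j) := by
  have hsum : ∑ q ∈ Finset.range (j + 1), E1 j x y s q = 1 / s := by
    rw [Finset.sum_congr rfl fun q hq =>
      E1_eq_dougallF_div hs hx hy (Finset.mem_range_succ_iff.mp hq), ← Finset.sum_div,
      sum_dougallF hs hx hy]
  have hQ : 0 < ff (x + j) j := ff_pos (by linarith)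
  have hY : 0 < ff (y + j) j := ff_pos (by linarith)
  have hXs : 0 < ff (x + s + j) j := ff_pos (by linarith)
  have hYs : 0 < ff (y + s + j) j := ff_pos (by linarith)
  rw [hsum, E1_eq_dougallF_div hs hx hy j.zero_le, dougallF_zero_right hs hy]
  field_simp

theorem stmt9 (j : ℕ) (s x y : ℝ) (hs : 0 < s) (hx : 0 < x) (hy : 0 < y)
    (hxy : 0 < x - y - j) :
    ∑ q ∈ Finset.range (j + 1), E1 j x y s q =
      E1 j x y s 0 * (ff (x + j) j * ff (y + s + j) j) /
        (ff (y + j) j * ff (x + s + j) j) :=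
  stmt9_general j s x y hs hx hy
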